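/- Let M, L ∈ ℝ^{d×d} be symmetric with L − M positive semidefinite, let f ∈ S(M,L), let A_eq ∈ ℝ^{d₂×d} and b_eq ∈ ℝ^{d₂}. Define the Lagrangian Λ : ℝ^{d+d₂} → ℝ by Λ(z, λ) := f(z) + λᵀ(A_eq z − b_eq). Then Λ ∈ S(M', L'), where M', L' ∈ ℝ^{(d+d₂)×(d+d₂)} are the symmetric block matrices M' := [[M, A_eqᵀ],[A_eq, 0]] and L' := [[L, A_eqᵀ],[A_eq, 0]]; that is, for all (z₁,λ₁), (z₂,λ₂) ∈ ℝ^{d+d₂}: (1/2)(z₂−z₁, λ₂−λ₁)ᵀM'(z₂−z₁, λ₂−λ₁) ≤ Λ(z₂,λ₂) − Λ(z₁,λ₁) − ∇Λ(z₁,λ₁)ᵀ(z₂−z₁, λ₂−λ₁) ≤ (1/2)(z₂−z₁, λ₂−λ₁)ᵀL'(z₂−z₁, λ₂−λ₁). -/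

import Mathlib

/-!
The Lagrangian splits as `Λ p = f (P p) + (½ pᵀ Q p - bᵀλ)` with `P` the projection onto the
`z`-block and `Q = [[0, Aᵀ], [A, 0]]`. Membership in `S(M, L)` is a two-sided bound on the Bregman
remainder `f y - f x - f'(x)(y - x)`, which is additive in `f`, commutes with precomposition by a
linear map `P` (turning `M` into `Pᵀ M P`), and equals `½ (y - x)ᵀ Q (y - x)` exactly for a
quadratic function. Hence `Λ ∈ S(Pᵀ M P + Q, Pᵀ L P + Q)`, and `Pᵀ M P + Q = [[M, Aᵀ], [A, 0]]`.
-/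

open Matrix

/-- Gradient of `f : ℝ^ι → ℝ` in coordinates. -/
noncomputable def grad {ι : Type*} [Fintype ι] [DecidableEq ι]
    (f : (ι → ℝ) → ℝ) (z : ι → ℝ) : ι → ℝ :=
  fun i => fderiv ℝ f z (Pi.single i 1)

/-- The class `S(M,L)`. -/
def SClass {ι : Type*} [Fintype ι] [DecidableEq ι]
    (M L : Matrix ι ι ℝ) (f : (ι → ℝ) → ℝ) : Prop :=
  ContDiff ℝ 1 f ∧ ∀ z₁ z₂ : ι → ℝ,
    (1/2) * ((z₂ - z₁) ⬝ᵥ M.mulVec (z₂ - z₁)) ≤ f z₂ - f z₁ - grad f z₁ ⬝ᵥ (z₂ - z₁) ∧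
    f z₂ - f z₁ - grad f z₁ ⬝ᵥ (z₂ - z₁) ≤ (1/2) * ((z₂ - z₁) ⬝ᵥ L.mulVec (z₂ - z₁))

section Bregman

variable {E F : Type*} [NormedAddCommGroup E] [NormedSpace ℝ E]
  [NormedAddCommGroup F] [NormedSpace ℝ F]

noncomputable def bregman (f : E → ℝ) (x y : E) : ℝ :=
  f y - f x - fderiv ℝ f x (y - x)

lemma bregman_add {f g : E → ℝ} {x : E} (hf : DifferentiableAt ℝ f x)
    (hg : DifferentiableAt ℝ g x) (y : E) :
    bregman (fun z => f z + g z) x y = bregman f x y + bregman g x y := by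
  simp only [bregman, fderiv_fun_add hf hg, _root_.add_apply]
  ring

lemma bregman_comp_continuousLinearMap {f : F → ℝ} (P : E →L[ℝ] F) {x : E}
    (hf : DifferentiableAt ℝ f (P x)) (y : E) :
    bregman (fun z => f (P z)) x y = bregman f (P x) (P y) := by
  simp only [bregman, fderiv_fun_comp x hf P.differentiableAt, P.fderiv,
    ContinuousLinearMap.comp_apply, map_sub]

lemma bregman_bilinear (B : E →L[ℝ] E →L[ℝ] ℝ) (x y : E) :
    bregman (fun z => B z z) x y = B (y - x) (y - x) := by
  have hB : HasFDerivAt (fun z => B z z)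
      (B.precompR E x (.id ℝ E) + B.precompL E (.id ℝ E) x) x :=
    B.hasFDerivAt_of_bilinear (hasFDerivAt_id x) (hasFDerivAt_id x)
  simp only [bregman, hB.fderiv, _root_.add_apply, ContinuousLinearMap.precompR_apply,
    ContinuousLinearMap.precompL_apply, ContinuousLinearMap.compL_apply,
    ContinuousLinearMap.comp_apply, ContinuousLinearMap.id_apply, map_sub, _root_.sub_apply]
  ring

lemma bregman_affine (ℓ : E →L[ℝ] ℝ) (e : ℝ) (x y : E) :
    bregman (fun z => ℓ z + e) x y = 0 := by
  simp only [bregman, fderiv_add_const, ℓ.fderiv, map_sub]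
  ring

end Bregman

lemma dotProduct_fromBlocks_mulVec_self {m n R : Type*} [Fintype m] [Fintype n] [CommRing R]
    (A : Matrix n m R) (p : m ⊕ n → R) :
    p ⬝ᵥ fromBlocks 0 Aᵀ A 0 *ᵥ p = 2 * ((p ∘ Sum.inr) ⬝ᵥ A *ᵥ (p ∘ Sum.inl)) := by
  conv_lhs => rw [← Sum.elim_comp_inl_inr p]
  rw [fromBlocks_mulVec, sumElim_dotProduct_sumElim, Sum.elim_comp_inl, Sum.elim_comp_inr]
  simp only [zero_mulVec, zero_add, add_zero, dotProduct_mulVec _ Aᵀ, vecMul_transpose,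
    dotProduct_comm (A *ᵥ _)]
  ring

lemma mulVec_dotProduct_mulVec_mulVec {m n R : Type*} [Fintype m] [Fintype n] [CommRing R]
    (P : Matrix m n R) (M : Matrix m m R) (x y : n → R) :
    (P *ᵥ x) ⬝ᵥ M *ᵥ (P *ᵥ y) = x ⬝ᵥ (Pᵀ * M * P) *ᵥ y := by
  rw [← mulVec_mulVec, ← mulVec_mulVec, dotProduct_mulVec x, vecMul_transpose]

section SClass

variable {ι κ : Type*} [Fintype ι] [DecidableEq ι] [Fintype κ] [DecidableEq κ]

lemma grad_dotProduct (f : (ι → ℝ) → ℝ) (z w : ι → ℝ) : grad f z ⬝ᵥ w = fderiv ℝ f z w := by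
  conv_rhs => rw [pi_eq_sum_univ' w, map_sum]
  simp only [map_smul, smul_eq_mul, dotProduct, grad, mul_comm]

lemma sClass_iff_bregman {M L : Matrix ι ι ℝ} {f : (ι → ℝ) → ℝ} :
    SClass M L f ↔ ContDiff ℝ 1 f ∧ ∀ z₁ z₂ : ι → ℝ,
      (1/2) * ((z₂ - z₁) ⬝ᵥ M *ᵥ (z₂ - z₁)) ≤ bregman f z₁ z₂ ∧
      bregman f z₁ z₂ ≤ (1/2) * ((z₂ - z₁) ⬝ᵥ L *ᵥ (z₂ - z₁)) := by
  simp only [SClass, bregman, grad_dotProduct]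

lemma SClass.add {M₁ L₁ M₂ L₂ : Matrix ι ι ℝ} {f g : (ι → ℝ) → ℝ}
    (hf : SClass M₁ L₁ f) (hg : SClass M₂ L₂ g) :
    SClass (M₁ + M₂) (L₁ + L₂) (fun z => f z + g z) := by
  rw [sClass_iff_bregman] at hf hg ⊢
  refine ⟨hf.1.add hg.1, fun z₁ z₂ => ?_⟩
  rw [bregman_add (hf.1.differentiable one_ne_zero z₁) (hg.1.differentiable one_ne_zero z₁)]
  obtain ⟨hf₁, hf₂⟩ := hf.2 z₁ z₂
  obtain ⟨hg₁, hg₂⟩ := hg.2 z₁ z₂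
  simp only [add_mulVec, dotProduct_add]
  constructor <;> linarith

lemma SClass.comp_mulVec {M L : Matrix ι ι ℝ} {f : (ι → ℝ) → ℝ} (hf : SClass M L f)
    (P : Matrix ι κ ℝ) : SClass (Pᵀ * M * P) (Pᵀ * L * P) (fun x => f (P *ᵥ x)) := by
  rw [sClass_iff_bregman] at hf ⊢
  let Pc : (κ → ℝ) →L[ℝ] (ι → ℝ) := (mulVecLin P).toContinuousLinearMap
  refine ⟨hf.1.comp Pc.contDiff, fun x₁ x₂ => ?_⟩
  have h := hf.2 (P *ᵥ x₁) (P *ᵥ x₂)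
  rw [← mulVec_sub, mulVec_dotProduct_mulVec_mulVec, mulVec_dotProduct_mulVec_mulVec] at h
  rwa [show bregman (fun x => f (P *ᵥ x)) x₁ x₂ = bregman f (P *ᵥ x₁) (P *ᵥ x₂) from
    bregman_comp_continuousLinearMap Pc (hf.1.differentiable one_ne_zero _) x₂]

lemma sClass_quadratic (Q : Matrix ι ι ℝ) (c : ι → ℝ) (e : ℝ) :
    SClass Q Q (fun x => (1/2) * (x ⬝ᵥ Q *ᵥ x) + (c ⬝ᵥ x + e)) := by
  let B : (ι → ℝ) →L[ℝ] (ι → ℝ) →L[ℝ] ℝ :=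
    ((1/2 : ℝ) • toLinearMap₂' ℝ Q).toContinuousBilinearMap
  let ℓ : (ι → ℝ) →L[ℝ] ℝ := (dotProductBilin ℝ ℝ c).toContinuousLinearMap
  have hq : (fun x => (1/2) * (x ⬝ᵥ Q *ᵥ x) + (c ⬝ᵥ x + e)) = fun x => B x x + (ℓ x + e) := by
    funext x
    simp [B, ℓ, toLinearMap₂'_apply']
  have hB : ∀ x y : ι → ℝ, B x y = (1/2) * (x ⬝ᵥ Q *ᵥ y) := fun x y => by
    simp [B, toLinearMap₂'_apply']
  rw [sClass_iff_bregman, hq]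
  refine ⟨by fun_prop, fun x₁ x₂ => ?_⟩
  rw [bregman_add (by fun_prop) (by fun_prop), bregman_bilinear, bregman_affine, hB]
  simp

theorem SClass.lagrangian {M L : Matrix ι ι ℝ} {f : (ι → ℝ) → ℝ} (hf : SClass M L f)
    (A : Matrix κ ι ℝ) (b : κ → ℝ) :
    SClass (fromBlocks M Aᵀ A 0) (fromBlocks L Aᵀ A 0)
      (fun p => f (p ∘ Sum.inl) + (p ∘ Sum.inr) ⬝ᵥ (A *ᵥ (p ∘ Sum.inl) - b)) := by
  let P : Matrix ι (ι ⊕ κ) ℝ := fromCols 1 0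
  have hP : ∀ p, P *ᵥ p = p ∘ Sum.inl := fun p => by
    ext i; simp [P, fromCols_mulVec]
  have hblocks : ∀ N : Matrix ι ι ℝ,
      fromBlocks N Aᵀ A 0 = Pᵀ * N * P + fromBlocks 0 Aᵀ A 0 := fun N => by
    rw [transpose_fromCols, fromRows_mul, fromRows_mul_fromCols]
    simp [fromBlocks_add]
  have hsplit : (fun p => f (p ∘ Sum.inl) + (p ∘ Sum.inr) ⬝ᵥ (A *ᵥ (p ∘ Sum.inl) - b)) =
      fun p => f (P *ᵥ p) +
        ((1/2) * (p ⬝ᵥ fromBlocks 0 Aᵀ A 0 *ᵥ p) + (Sum.elim 0 (-b) ⬝ᵥ p + 0)) := by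
    funext p
    obtain ⟨z, l, rfl⟩ : ∃ z l, p = Sum.elim z l := ⟨_, _, (Sum.elim_comp_inl_inr p).symm⟩
    rw [hP, dotProduct_fromBlocks_mulVec_self, sumElim_dotProduct_sumElim]
    simp only [Sum.elim_comp_inl, Sum.elim_comp_inr, dotProduct_sub, zero_dotProduct,
      neg_dotProduct, dotProduct_comm b]
    ring
  rw [hsplit, hblocks M, hblocks L]
  exact (hf.comp_mulVec P).add (sClass_quadratic _ _ _)

end SClass

theorem stmt_18_general {d d₂ : ℕ} (M L : Matrix (Fin d) (Fin d) ℝ)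
    (f : (Fin d → ℝ) → ℝ) (hf : SClass M L f)
    (Aeq : Matrix (Fin d₂) (Fin d) ℝ) (beq : Fin d₂ → ℝ)
    (Lag : (Fin d ⊕ Fin d₂ → ℝ) → ℝ)
    (hLag : ∀ p : Fin d ⊕ Fin d₂ → ℝ,
      Lag p = f (fun i => p (Sum.inl i)) +
        (fun j => p (Sum.inr j)) ⬝ᵥ (Aeq.mulVec (fun i => p (Sum.inl i)) - beq)) :
    SClass (fromBlocks M Aeqᵀ Aeq 0) (fromBlocks L Aeqᵀ Aeq 0) Lag := by
  obtain rfl : Lag = _ := funext hLag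
  exact hf.lagrangian Aeq beq

theorem stmt_18 {d d₂ : ℕ} (M L : Matrix (Fin d) (Fin d) ℝ)
    (hM : M.IsSymm) (hL : L.IsSymm) (hLM : (L - M).PosSemidef)
    (f : (Fin d → ℝ) → ℝ) (hf : SClass M L f)
    (Aeq : Matrix (Fin d₂) (Fin d) ℝ) (beq : Fin d₂ → ℝ)
    (Lag : (Fin d ⊕ Fin d₂ → ℝ) → ℝ)
    (hLag : ∀ p : Fin d ⊕ Fin d₂ → ℝ,
      Lag p = f (fun i => p (Sum.inl i)) +
        (fun j => p (Sum.inr j)) ⬝ᵥ (Aeq.mulVec (fun i => p (Sum.inl i)) - beq)) :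
    SClass (fromBlocks M Aeqᵀ Aeq 0) (fromBlocks L Aeqᵀ Aeq 0) Lag :=
  stmt_18_general M L f hf Aeq beq Lag hLag
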